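/- Let w = u ++ v be a word split into prefix u and suffix v, and let q be a word with ed(w, q) ≤ d. Then there exists a decomposition q = p' ++ s' such that ed(u, p') + ed(v, s') ≤ d; in particular, either ed(u, p') ≤ ⌈d/2⌉ or ed(v, s') ≤ ⌈d/2⌉. -/

import Mathlib

/-!
Read the split off an optimal edit of `u ++ v` into `q`: the letters of `q` produced while the
edit is still consuming `u` form `p'`, the rest form `s'`, and the cost of the edit splits
accordingly. Along the recursion of `levenshtein` this is an induction on `u` and `q`: each
possible first move (delete the head of `u`, insert the head of `q`, substitute one for the
other) extends the split of the smaller instance at no extra cost. The `⌈d/2⌉` bound holds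
because the two distances sum to at most `d`.
-/

/-- Cost structure of the former Mathlib `Levenshtein.Cost` (removed from Mathlib). -/
structure Levenshtein.Cost (α β δ : Type*) where
  delete : α → δ
  insert : β → δ
  substitute : α → β → δ

/-- The former Mathlib `Levenshtein.defaultCost`. -/
def Levenshtein.defaultCost {α : Type*} [DecidableEq α] : Levenshtein.Cost α α ℕ where
  delete _ := 1
  insert _ := 1
  substitute a b := if a = b then 0 else 1

/-- The former Mathlib `levenshtein`, given by its characterizing recursion
(`levenshtein_nil_nil`, `levenshtein_nil_cons`, `levenshtein_cons_nil`, `levenshtein_cons_cons`). -/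
def levenshtein {α β δ : Type*} [AddZeroClass δ] [Min δ] (C : Levenshtein.Cost α β δ) :
    List α → List β → δ
  | [], [] => 0
  | [], y :: ys => C.insert y + levenshtein C [] ys
  | x :: xs, [] => C.delete x + levenshtein C xs []
  | x :: xs, y :: ys =>
    min (C.delete x + levenshtein C xs (y :: ys))
      (min (C.insert y + levenshtein C (x :: xs) ys) (C.substitute x y + levenshtein C xs ys))

/-- Levenshtein edit distance with unit costs. -/
def ed {α : Type*} [DecidableEq α] (u v : List α) : ℕ :=
  levenshtein Levenshtein.defaultCost u v

section Recursion

variable {α β δ : Type*} [AddZeroClass δ] [Min δ] (C : Levenshtein.Cost α β δ)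

@[simp]
theorem levenshtein_nil_nil : levenshtein C [] [] = 0 := by
  rw [levenshtein]

@[simp]
theorem levenshtein_nil_cons (y : β) (ys : List β) :
    levenshtein C [] (y :: ys) = C.insert y + levenshtein C [] ys := by
  rw [levenshtein]

@[simp]
theorem levenshtein_cons_nil (x : α) (xs : List α) :
    levenshtein C (x :: xs) [] = C.delete x + levenshtein C xs [] := by
  rw [levenshtein]

theorem levenshtein_cons_cons (x : α) (xs : List α) (y : β) (ys : List β) :
    levenshtein C (x :: xs) (y :: ys) =
      min (C.delete x + levenshtein C xs (y :: ys))
        (min (C.insert y + levenshtein C (x :: xs) ys) (C.substitute x y + levenshtein C xs ys)) := by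
  rw [levenshtein]

end Recursion

section Order

variable {α β δ : Type*} [AddZeroClass δ] [LinearOrder δ] (C : Levenshtein.Cost α β δ)

theorem levenshtein_cons_left_le (x : α) (xs : List α) (ys : List β) :
    levenshtein C (x :: xs) ys ≤ C.delete x + levenshtein C xs ys := by
  cases ys with
  | nil => exact (levenshtein_cons_nil C x xs).le
  | cons y ys => exact (levenshtein_cons_cons C x xs y ys).trans_le (min_le_left _ _)

theorem levenshtein_cons_right_le (xs : List α) (y : β) (ys : List β) :
    levenshtein C xs (y :: ys) ≤ C.insert y + levenshtein C xs ys := by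
  cases xs with
  | nil => exact (levenshtein_nil_cons C y ys).le
  | cons x xs =>
    rw [levenshtein_cons_cons]
    exact (min_le_right _ _).trans (min_le_left _ _)

theorem levenshtein_cons_cons_le_substitute (x : α) (xs : List α) (y : β) (ys : List β) :
    levenshtein C (x :: xs) (y :: ys) ≤ C.substitute x y + levenshtein C xs ys := by
  rw [levenshtein_cons_cons]
  exact (min_le_right _ _).trans (min_le_right _ _)

end Order

theorem add_le_add_of_le_add_of_add_le {M : Type*} [AddCommMonoid M] [PartialOrder M]
    [IsOrderedAddMonoid M] {a b c e r : M} (h₁ : a ≤ c + b) (h₂ : b + e ≤ r) :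
    a + e ≤ c + r :=
  calc a + e ≤ c + b + e := by gcongr
    _ = c + (b + e) := add_assoc c b e
    _ ≤ c + r := by gcongr

theorem exists_split_levenshtein_add_le {α β δ : Type*} [AddCommMonoid δ] [LinearOrder δ]
    [IsOrderedAddMonoid δ] (C : Levenshtein.Cost α β δ) (u v : List α) (q : List β) :
    ∃ p s, q = p ++ s ∧ levenshtein C u p + levenshtein C v s ≤ levenshtein C (u ++ v) q := by
  induction u generalizing q with
  | nil => exact ⟨[], q, rfl, by simp⟩
  | cons x u ihu =>
    induction q with
    | nil =>
      obtain ⟨p, s, hps, hle⟩ := ihu []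
      obtain ⟨rfl, rfl⟩ := List.append_eq_nil_iff.mp hps.symm
      refine ⟨[], [], rfl, ?_⟩
      rw [List.cons_append, levenshtein_cons_nil C x (u ++ v)]
      exact add_le_add_of_le_add_of_add_le (levenshtein_cons_nil C x u).le hle
    | cons y q ihq =>
      rw [List.cons_append] at ihq ⊢
      rw [levenshtein_cons_cons]
      let Splits (t : δ) : Prop :=
        ∃ p s, y :: q = p ++ s ∧ levenshtein C (x :: u) p + levenshtein C v s ≤ t
      show Splits (min _ (min _ _))
      refine min_rec' Splits ?delete (min_rec' Splits ?insert ?substitute)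
      case delete =>
        obtain ⟨p, s, hq, hle⟩ := ihu (y :: q)
        exact ⟨p, s, hq, add_le_add_of_le_add_of_add_le (levenshtein_cons_left_le C x u p) hle⟩
      case insert =>
        obtain ⟨p, s, rfl, hle⟩ := ihq
        exact ⟨y :: p, s, rfl,
          add_le_add_of_le_add_of_add_le (levenshtein_cons_right_le C (x :: u) y p) hle⟩
      case substitute =>
        obtain ⟨p, s, rfl, hle⟩ := ihu q
        exact ⟨y :: p, s, rfl,
          add_le_add_of_le_add_of_add_le (levenshtein_cons_cons_le_substitute C x u y p) hle⟩

/-- If `ed (u ++ v) q ≤ d`, then `q` splits as `p' ++ s'` with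
`ed u p' + ed v s' ≤ d`; in particular either `ed u p' ≤ ⌈d/2⌉` or `ed v s' ≤ ⌈d/2⌉`. -/
theorem exists_split_of_ed_concat_le {α : Type*} [DecidableEq α]
    (u v q : List α) (d : ℕ) (hd : ed (u ++ v) q ≤ d) :
    ∃ p' s' : List α, q = p' ++ s' ∧ ed u p' + ed v s' ≤ d ∧
      (ed u p' ≤ (d + 1) / 2 ∨ ed v s' ≤ (d + 1) / 2) := by
  obtain ⟨p, s, rfl, hle⟩ := exists_split_levenshtein_add_le Levenshtein.defaultCost u v q
  have hsum : ed u p + ed v s ≤ d := hle.trans hd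
  exact ⟨p, s, rfl, hsum, by omega⟩
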